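/- Uniqueness via the part metric: Let u¹, u² : ℝᴺ → ℝ be bounded continuous functions with positive infimum, with u¹(x) → u⁰ and u²(x) → u⁰ as ‖x‖ → ∞ for a common limit u⁰ > 0. Suppose that whenever (1/α)u¹ ≤ u² ≤ α u¹ pointwise for some α > 1, one has the strict inequalities (1/α)u¹(x) < u²(x) < α u¹(x) for all x ∈ ℝᴺ. Then ρ(u¹,u²) = 0, i.e., u¹ = u², where ρ is the part metric. -/

import Mathlib

/-!
For `α > 0`, the bound `u₁ / α ≤ u₂ ≤ α * u₁` says exactly that `g := |log u₂ - log u₁| ≤ log α` everywhere.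
The function `g` is continuous and tends to `0` at infinity, so if it is not identically zero it
attains a positive maximum `M`. Comparison with `α = exp M` then holds, but its strict form fails at
a maximiser; hence `g = 0`, i.e. `u₁ = u₂`, and the part metric of a function with itself is `0`.
-/

def partSet {N : ℕ} (u v : EuclideanSpace ℝ (Fin N) → ℝ) : Set ℝ :=
  {l | ∃ α : ℝ, 1 ≤ α ∧ l = Real.log α ∧ ∀ x, u x / α ≤ v x ∧ v x ≤ α * u x}

noncomputable def partMetric {N : ℕ} (u v : EuclideanSpace ℝ (Fin N) → ℝ) : ℝ :=
  sInf (partSet u v)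

open Filter Topology

section LogComparison

open Real

variable {a b α : ℝ}

theorem div_le_and_le_mul_iff_abs_log_sub_le (ha : 0 < a) (hb : 0 < b) (hα : 0 < α) :
    (a / α ≤ b ∧ b ≤ α * a) ↔ |log b - log a| ≤ log α := by
  rw [← log_le_log_iff (div_pos ha hα) hb, ← log_le_log_iff hb (mul_pos hα ha),
    log_div ha.ne' hα.ne', log_mul hα.ne' ha.ne', abs_sub_le_iff]
  constructor <;> rintro ⟨h₁, h₂⟩ <;> constructor <;> linarith

theorem div_lt_and_lt_mul_iff_abs_log_sub_lt (ha : 0 < a) (hb : 0 < b) (hα : 0 < α) :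
    (a / α < b ∧ b < α * a) ↔ |log b - log a| < log α := by
  rw [← log_lt_log_iff (div_pos ha hα) hb, ← log_lt_log_iff hb (mul_pos hα ha),
    log_div ha.ne' hα.ne', log_mul hα.ne' ha.ne', abs_sub_lt_iff]
  constructor <;> rintro ⟨h₁, h₂⟩ <;> constructor <;> linarith

theorem eq_of_tendsto_cocompact_of_comparison_strict {X : Type*} [TopologicalSpace X]
    {u v : X → ℝ} {c : ℝ} (hc : c ≠ 0) (hu : Continuous u) (hv : Continuous v)
    (hu_pos : ∀ x, 0 < u x) (hv_pos : ∀ x, 0 < v x)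
    (hu_lim : Tendsto u (cocompact X) (𝓝 c)) (hv_lim : Tendsto v (cocompact X) (𝓝 c))
    (hstrict : ∀ α : ℝ, 1 < α → (∀ x, u x / α ≤ v x ∧ v x ≤ α * u x) →
      ∀ x, u x / α < v x ∧ v x < α * u x) :
    u = v := by
  let g : X → ℝ := fun x => |log (v x) - log (u x)|
  have hg_cont : Continuous g :=
    ((hv.log fun x => (hv_pos x).ne').sub (hu.log fun x => (hu_pos x).ne')).abs
  have hg_lim : Tendsto g (cocompact X) (𝓝 0) := by
    simpa using ((hv_lim.log hc).sub (hu_lim.log hc)).abs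
  funext x₁
  by_contra hne
  have hg_pos : 0 < g x₁ :=
    abs_pos.2 <| sub_ne_zero.2 fun h => hne (log_injOn_pos (hu_pos x₁) (hv_pos x₁) h.symm)
  obtain ⟨x₀, hmax⟩ :=
    hg_cont.exists_forall_ge' x₁ ((hg_lim.eventually_lt_const hg_pos).mono fun _ => le_of_lt)
  have hα : 1 < exp (g x₀) := one_lt_exp_iff.2 (hg_pos.trans_le (hmax x₁))
  have hcomp : ∀ x, u x / exp (g x₀) ≤ v x ∧ v x ≤ exp (g x₀) * u x := fun x =>
    (div_le_and_le_mul_iff_abs_log_sub_le (hu_pos x) (hv_pos x) (exp_pos _)).2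
      (by rw [log_exp]; exact hmax x)
  have hlt := (div_lt_and_lt_mul_iff_abs_log_sub_lt (hu_pos x₀) (hv_pos x₀) (exp_pos _)).1
    (hstrict _ hα hcomp x₀)
  rw [log_exp] at hlt
  exact lt_irrefl _ hlt

end LogComparison

theorem tendsto_cocompact_of_forall_le_norm {E : Type*} [SeminormedAddGroup E] [ProperSpace E]
    {f : E → ℝ} {c : ℝ} (h : ∀ ε > 0, ∃ R : ℝ, ∀ x, R ≤ ‖x‖ → |f x - c| < ε) :
    Tendsto f (cocompact E) (𝓝 c) :=
  Metric.tendsto_nhds.2 fun ε hε => by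
    obtain ⟨R, hR⟩ := h ε hε
    exact (tendsto_norm_cocompact_atTop.eventually_ge_atTop R).mono hR

theorem partMetric_self {N : ℕ} (u : EuclideanSpace ℝ (Fin N) → ℝ) : partMetric u u = 0 :=
  IsLeast.csInf_eq ⟨⟨1, le_rfl, Real.log_one.symm, fun x => by simp⟩,
    by rintro l ⟨α, hα, rfl, -⟩; exact Real.log_nonneg hα⟩

theorem uniqueness_via_part_metric_general {N : ℕ}
    (u₁ u₂ : EuclideanSpace ℝ (Fin N) → ℝ) (u₀ : ℝ) (hu₀ : 0 < u₀)
    (h₁_cont : Continuous u₁) (h₂_cont : Continuous u₂)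
    (h₁_pos : ∃ m : ℝ, 0 < m ∧ ∀ x, m ≤ u₁ x)
    (h₂_pos : ∃ m : ℝ, 0 < m ∧ ∀ x, m ≤ u₂ x)
    (h₁_lim : ∀ ε > 0, ∃ R : ℝ, ∀ x, R ≤ ‖x‖ → |u₁ x - u₀| < ε)
    (h₂_lim : ∀ ε > 0, ∃ R : ℝ, ∀ x, R ≤ ‖x‖ → |u₂ x - u₀| < ε)
    (hstrict : ∀ α : ℝ, 1 < α →
      (∀ x, u₁ x / α ≤ u₂ x ∧ u₂ x ≤ α * u₁ x) →
      ∀ x, u₁ x / α < u₂ x ∧ u₂ x < α * u₁ x) :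
    partMetric u₁ u₂ = 0 ∧ u₁ = u₂ := by
  obtain ⟨m₁, hm₁, hm₁_le⟩ := h₁_pos
  obtain ⟨m₂, hm₂, hm₂_le⟩ := h₂_pos
  have heq : u₁ = u₂ := eq_of_tendsto_cocompact_of_comparison_strict hu₀.ne' h₁_cont h₂_cont
    (fun x => hm₁.trans_le (hm₁_le x)) (fun x => hm₂.trans_le (hm₂_le x))
    (tendsto_cocompact_of_forall_le_norm h₁_lim) (tendsto_cocompact_of_forall_le_norm h₂_lim)
    hstrict
  subst heq
  exact ⟨partMetric_self u₁, rfl⟩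

/-- Uniqueness via the part metric: two bounded continuous positive functions with
the same positive limit at spatial infinity, for which nonstrict `α`-comparison
(`α > 1`) always improves to strict comparison, must coincide. -/
theorem uniqueness_via_part_metric {N : ℕ}
    (u₁ u₂ : EuclideanSpace ℝ (Fin N) → ℝ) (u₀ : ℝ) (hu₀ : 0 < u₀)
    (h₁_cont : Continuous u₁) (h₂_cont : Continuous u₂)
    (h₁_bdd : ∃ C : ℝ, ∀ x, u₁ x ≤ C) (h₂_bdd : ∃ C : ℝ, ∀ x, u₂ x ≤ C)
    (h₁_pos : ∃ m : ℝ, 0 < m ∧ ∀ x, m ≤ u₁ x)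
    (h₂_pos : ∃ m : ℝ, 0 < m ∧ ∀ x, m ≤ u₂ x)
    (h₁_lim : ∀ ε > 0, ∃ R : ℝ, ∀ x, R ≤ ‖x‖ → |u₁ x - u₀| < ε)
    (h₂_lim : ∀ ε > 0, ∃ R : ℝ, ∀ x, R ≤ ‖x‖ → |u₂ x - u₀| < ε)
    (hstrict : ∀ α : ℝ, 1 < α →
      (∀ x, u₁ x / α ≤ u₂ x ∧ u₂ x ≤ α * u₁ x) →
      ∀ x, u₁ x / α < u₂ x ∧ u₂ x < α * u₁ x) :
    partMetric u₁ u₂ = 0 ∧ u₁ = u₂ :=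
  uniqueness_via_part_metric_general u₁ u₂ u₀ hu₀ h₁_cont h₂_cont h₁_pos h₂_pos h₁_lim h₂_lim
    hstrict
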